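/- Let D be a maximal ASPD on a finite set A with n = |A| ≥ 4, let a_1, a_2 be its two bottom alternatives, and define D' := {ω_{A∖{a_1,a_2}} : ω ∈ D, ω(n) = a_1, ω(n−1) = a_2}. Then for all distinct x, y ∈ A∖{a_1,a_2}, both minima below exist and min{i : {x,y} = {ω(i), ω(i+1)} for some ω ∈ D} = min{i : {x,y} = {ω'(i), ω'(i+1)} for some ω' ∈ D'}; that is, a topmost contiguous occurrence of x and y in D appears in D'. -/

import Mathlib

variable {α : Type*} [DecidableEq α]

/-- Preferences (linear orders written as lists, most preferred first) on `A`. -/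
def PrefOn (A : Finset α) : Set (List α) :=
  {l | l.Nodup ∧ l.toFinset = A}

/-- Restriction of a preference to a subset `T`. -/
def restrictPref (l : List α) (T : Finset α) : List α :=
  l.filter (fun a => decide (a ∈ T))

/-- Arrow's single-peaked domain on `A`: for every triple `T ⊆ A` some `x ∈ T`
is never ranked last in the restriction of the domain to `T`. -/
def IsASPD (A : Finset α) (D : Set (List α)) : Prop :=
  D ⊆ PrefOn A ∧
    ∀ T : Finset α, T ⊆ A → T.card = 3 →
      ∃ x ∈ T, ∀ l ∈ D, (restrictPref l T).getLast? ≠ some x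

/-- Maximal Arrow's single-peaked domain on `A`. -/
def IsMaximalASPD (A : Finset α) (D : Set (List α)) : Prop :=
  IsASPD A D ∧ ∀ l ∈ PrefOn A, l ∉ D → ¬ IsASPD A (insert l D)

/-- The domain `D_i` obtained from `D` by restricting the preferences ending in
the bottom alternative `a` to `A ∖ {a}`. -/
def bottomRestrict (A : Finset α) (D : Set (List α)) (a : α) : Set (List α) :=
  {m | ∃ l ∈ D, l.getLast? = some a ∧ m = restrictPref l (A.erase a)}

/-- The domain `D_{ij}` obtained from `D` by restricting the preferences with
last alternative `a₁` and second-to-last alternative `a₂` to `A ∖ {a₁, a₂}`. -/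
def bottom2Restrict (A : Finset α) (D : Set (List α)) (a₁ a₂ : α) : Set (List α) :=
  {m | ∃ l ∈ D, l.getLast? = some a₁ ∧ l[A.card - 2]? = some a₂ ∧
    m = restrictPref l (A \ {a₁, a₂})}

/-- `x` and `y` occur contiguously at (0-based) position `i` in the list `l`. -/
def PairAt (l : List α) (x y : α) (i : ℕ) : Prop :=
  (l[i]? = some x ∧ l[i + 1]? = some y) ∨
    (l[i]? = some y ∧ l[i + 1]? = some x)

/-!
By maximality, `D` contains every preference that ranks last, on each triple, what some member
of `D` ranks last there. Hence, with bottoms `a₁, a₂`, moving `a₂, a₁` to the end of any `ω ∈ D`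
gives a preference `ω*` in `D`: on a triple it ranks last `a₁` (like an order ending in `a₁`),
or `a₂` (like an order ending in `a₂`), or what `ω` does. Passing from `ω` to `ω*` only moves a
contiguous occurrence of `x, y` upwards, so a topmost one occurs in some `ω*`, and `ω*`
restricts to `D'`. That `x, y` are contiguous somewhere in `D` follows by induction on `|A|`:
if a bottom `b` lies outside `{x, y}`, the orders ending in `b`, with `b` removed, form a
maximal ASPD on `A ∖ {b}`; otherwise `{x, y}` is the set of bottoms and `ω*` ends in `x, y`.
-/

section Lists

variable {β : Type*}

theorem PairAt.symm {l : List β} {x y : β} {i : ℕ} (h : PairAt l x y i) : PairAt l y x i :=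
  Or.symm h

theorem PairAt.append {l : List β} {x y : β} {i : ℕ} (h : PairAt l x y i) (t : List β) :
    PairAt (l ++ t) x y i := by
  rcases h with ⟨hx, hy⟩ | ⟨hx, hy⟩ <;>
    simp [PairAt, List.getElem?_append_left (List.getElem?_eq_some_iff.1 hx).1,
      List.getElem?_append_left (List.getElem?_eq_some_iff.1 hy).1, hx, hy]

theorem pairAt_append_pair (p : List β) (x y : β) : PairAt (p ++ [x, y]) x y p.length :=
  Or.inl ⟨by simp, by simp⟩

theorem exists_le_getElem?_filter {l : List β} {p : β → Bool} {x y : β} {i : ℕ}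
    (hx : l[i]? = some x) (hy : l[i + 1]? = some y) (hpx : p x) (hpy : p y) :
    ∃ j ≤ i, (l.filter p)[j]? = some x ∧ (l.filter p)[j + 1]? = some y := by
  induction l generalizing i with
  | nil => simp at hx
  | cons a t ih =>
    rcases i with _ | i
    · rcases t with _ | ⟨b, t⟩
      · simp at hy
      · simp only [List.getElem?_cons_zero, List.getElem?_cons_succ, Option.some.injEq] at hx hy
        subst hx hy
        exact ⟨0, le_rfl, by simp [hpx, hpy]⟩
    · obtain ⟨j, hj, h⟩ := ih (by simpa using hx) (by simpa using hy)
      by_cases ha : p a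
      · exact ⟨j + 1, by omega, by simpa [List.filter_cons, ha] using h⟩
      · exact ⟨j, by omega, by simpa [List.filter_cons, ha] using h⟩

theorem exists_eq_append_pair {l : List β} (h : 2 ≤ l.length) : ∃ p u v, l = p ++ [u, v] := by
  rcases hr : l.reverse with _ | ⟨v, _ | ⟨u, q⟩⟩
  · simp_all
  · simp [← List.length_reverse (as := l), hr] at h
  · exact ⟨q.reverse, u, v, by rw [← List.reverse_reverse l, hr]; simp⟩

end Lists

section Restriction

variable {l p t : List α} {A S T : Finset α} {a : α}

theorem restrictPref_append (l₁ l₂ : List α) (T : Finset α) :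
    restrictPref (l₁ ++ l₂) T = restrictPref l₁ T ++ restrictPref l₂ T :=
  List.filter_append _ _

theorem restrictPref_restrictPref (l : List α) (h : T ⊆ S) :
    restrictPref (restrictPref l S) T = restrictPref l T := by
  simp only [restrictPref, List.filter_filter]
  exact List.filter_congr fun a _ => by by_cases ha : a ∈ T <;> simp [ha, @h a]

theorem getLast?_restrictPref (hl : l.getLast? = some a) (ha : a ∈ T) :
    (restrictPref l T).getLast? = some a := by
  obtain ⟨p, rfl⟩ := List.getLast?_eq_some_iff.1 hl
  simp [restrictPref, ha]

theorem PairAt.exists_le_restrictPref {x y : α} {i : ℕ} (h : PairAt l x y i) (hx : x ∈ T)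
    (hy : y ∈ T) : ∃ j ≤ i, PairAt (restrictPref l T) x y j := by
  have hx' : decide (x ∈ T) := by simpa using hx
  have hy' : decide (y ∈ T) := by simpa using hy
  rcases h with ⟨h₁, h₂⟩ | ⟨h₁, h₂⟩
  · obtain ⟨j, hj, h⟩ := exists_le_getElem?_filter (p := fun a => decide (a ∈ T)) h₁ h₂ hx' hy'
    exact ⟨j, hj, Or.inl h⟩
  · obtain ⟨j, hj, h⟩ := exists_le_getElem?_filter (p := fun a => decide (a ∈ T)) h₁ h₂ hy' hx'
    exact ⟨j, hj, Or.inr h⟩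

theorem length_eq_card_of_mem_prefOn (h : l ∈ PrefOn A) : l.length = A.card := by
  rw [← h.2, List.toFinset_card_of_nodup h.1]

theorem mem_iff_of_mem_prefOn (h : l ∈ PrefOn A) : a ∈ l ↔ a ∈ A := by
  rw [← h.2, List.mem_toFinset]

theorem exists_getLast?_of_mem_prefOn (h : l ∈ PrefOn A) (ha : a ∈ A) : ∃ c, l.getLast? = some c :=
  Option.ne_none_iff_exists'.1 <| mt List.getLast?_eq_none_iff.1 <|
    List.ne_nil_of_mem ((mem_iff_of_mem_prefOn h).2 ha)

theorem restrictPref_mem_prefOn (h : l ∈ PrefOn A) (hT : T ⊆ A) : restrictPref l T ∈ PrefOn T :=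
  ⟨h.1.filter _, by ext a; simpa [restrictPref, mem_iff_of_mem_prefOn h] using @hT a⟩

theorem append_mem_prefOn (hp : p ∈ PrefOn S) (ht : t ∈ PrefOn T) (hST : Disjoint S T) :
    p ++ t ∈ PrefOn (S ∪ T) := by
  refine ⟨List.Nodup.append hp.1 ht.1 fun a has hat => ?_, by simp [hp.2, ht.2]⟩
  exact Finset.disjoint_left.1 hST ((mem_iff_of_mem_prefOn hp).1 has)
    ((mem_iff_of_mem_prefOn ht).1 hat)

theorem restrictPref_sdiff_of_append (h : p ++ t ∈ PrefOn A) :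
    restrictPref (p ++ t) (A \ t.toFinset) = p := by
  have hdisj := List.disjoint_of_nodup_append h.1
  have hp : restrictPref p (A \ t.toFinset) = p := List.filter_eq_self.2 fun a ha => by
    simpa using ⟨(mem_iff_of_mem_prefOn h).1 (List.mem_append_left t ha), fun hat => hdisj ha hat⟩
  have ht : restrictPref t (A \ t.toFinset) = [] := List.filter_eq_nil_iff.2 fun a ha => by
    simp [ha]
  rw [restrictPref_append, hp, ht, List.append_nil]

end Restriction

section Domains

variable {A : Finset α} {D : Set (List α)} {l m : List α} {a₁ a₂ b : α}

theorem mem_bottomRestrict_iff (hD : D ⊆ PrefOn A) :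
    m ∈ bottomRestrict A D b ↔ m ++ [b] ∈ D := by
  have key : ∀ {p}, p ++ [b] ∈ D → restrictPref (p ++ [b]) (A.erase b) = p := fun hp => by
    simpa [Finset.erase_eq] using restrictPref_sdiff_of_append (hD hp)
  constructor
  · rintro ⟨l, hl, hlast, rfl⟩
    obtain ⟨p, rfl⟩ := List.getLast?_eq_some_iff.1 hlast
    rwa [key hl]
  · exact fun hm => ⟨_, hm, List.getLast?_concat, (key hm).symm⟩

theorem mem_bottom2Restrict_iff (hD : D ⊆ PrefOn A) (hA : 2 ≤ A.card) :
    m ∈ bottom2Restrict A D a₁ a₂ ↔ m ++ [a₂, a₁] ∈ D := by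
  have key : ∀ {p}, p ++ [a₂, a₁] ∈ D → restrictPref (p ++ [a₂, a₁]) (A \ {a₁, a₂}) = p :=
    fun hp => by simpa [Finset.pair_comm] using restrictPref_sdiff_of_append (hD hp)
  constructor
  · rintro ⟨l, hl, hlast, hsnd, rfl⟩
    have hlen := length_eq_card_of_mem_prefOn (hD hl)
    obtain ⟨p, u, v, rfl⟩ := exists_eq_append_pair (hlen ▸ hA)
    simp only [List.length_append, List.length_cons, List.length_nil] at hlen
    obtain rfl : v = a₁ := by simpa using hlast
    obtain rfl : u = a₂ := by simpa [← hlen, List.getElem?_append_right] using hsnd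
    rwa [key hl]
  · intro hm
    have hlen := length_eq_card_of_mem_prefOn (hD hm)
    simp only [List.length_append, List.length_cons, List.length_nil] at hlen
    exact ⟨_, hm, by simp, by simp [← hlen], (key hm).symm⟩

end Domains

def NeverLastOn (D : Set (List α)) (T : Finset α) (x : α) : Prop :=
  ∀ l ∈ D, (restrictPref l T).getLast? ≠ some x

section Maximal

variable {A T : Finset α} {D : Set (List α)} {l : List α} {a₁ a₂ b x : α}

theorem NeverLastOn.insert {l' : List α} (hx : NeverLastOn D T x) (hl' : l' ∈ D)
    (h : (restrictPref l T).getLast? = (restrictPref l' T).getLast?) :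
    NeverLastOn (insert l D) T x :=
  Set.forall_mem_insert.2 ⟨h ▸ hx l' hl', hx⟩

theorem IsASPD.getLast?_eq_or_eq (hD : IsASPD A D) (hne : a₁ ≠ a₂)
    (hb₁ : ∃ l ∈ D, l.getLast? = some a₁) (hb₂ : ∃ l ∈ D, l.getLast? = some a₂) (hl : l ∈ D) :
    l.getLast? = some a₁ ∨ l.getLast? = some a₂ := by
  obtain ⟨l₁, hl₁, hlast₁⟩ := hb₁
  obtain ⟨l₂, hl₂, hlast₂⟩ := hb₂
  have ha₁ := (mem_iff_of_mem_prefOn (hD.1 hl₁)).1 (List.mem_of_getLast? hlast₁)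
  have ha₂ := (mem_iff_of_mem_prefOn (hD.1 hl₂)).1 (List.mem_of_getLast? hlast₂)
  obtain ⟨c, hc⟩ := exists_getLast?_of_mem_prefOn (hD.1 hl) ha₁
  by_contra! h
  have hcA := (mem_iff_of_mem_prefOn (hD.1 hl)).1 (List.mem_of_getLast? hc)
  have hc₁ : a₁ ≠ c := by rintro rfl; exact h.1 hc
  have hc₂ : a₂ ≠ c := by rintro rfl; exact h.2 hc
  obtain ⟨x, hxT, hx⟩ := hD.2 {a₁, a₂, c} (by simp [Finset.insert_subset_iff, ha₁, ha₂, hcA])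
    (Finset.card_eq_three.2 ⟨a₁, a₂, c, hne, hc₁, hc₂, rfl⟩)
  simp only [Finset.mem_insert, Finset.mem_singleton] at hxT
  rcases hxT with rfl | rfl | rfl
  · exact hx l₁ hl₁ (getLast?_restrictPref hlast₁ (by simp))
  · exact hx l₂ hl₂ (getLast?_restrictPref hlast₂ (by simp))
  · exact hx l hl (getLast?_restrictPref hc (by simp))

theorem getLast?_restrictPref_sdiff_append (hT : T ⊆ A) (h₁ : a₁ ∉ T) :
    (restrictPref (restrictPref l (A \ {a₁, a₂}) ++ [a₂, a₁]) T).getLast? =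
      if a₂ ∈ T then some a₂ else (restrictPref l T).getLast? := by
  split_ifs with h₂
  · simp [restrictPref, h₁, h₂]
  · have hT' : T ⊆ A \ {a₁, a₂} := fun a ha => by
      simp only [Finset.mem_sdiff, Finset.mem_insert, Finset.mem_singleton]
      exact ⟨hT ha, by rintro (rfl | rfl) <;> contradiction⟩
    rw [restrictPref_append, restrictPref_restrictPref _ hT']
    simp [restrictPref, h₁, h₂]

theorem IsASPD.bottomRestrict (hD : IsASPD A D) : IsASPD (A.erase b) (bottomRestrict A D b) := by
  refine ⟨?_, fun T hT hT3 => ?_⟩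
  · rintro _ ⟨l, hl, -, rfl⟩
    exact restrictPref_mem_prefOn (hD.1 hl) (Finset.erase_subset _ _)
  · obtain ⟨x, hxT, hx⟩ := hD.2 T (hT.trans (Finset.erase_subset _ _)) hT3
    refine ⟨x, hxT, ?_⟩
    rintro _ ⟨l, hl, -, rfl⟩
    rw [restrictPref_restrictPref _ hT]
    exact hx l hl

namespace IsMaximalASPD

theorem mem_of_forall_triple (hD : IsMaximalASPD A D) (hl : l ∈ PrefOn A)
    (h : ∀ T ⊆ A, T.card = 3 → ∃ x ∈ T, NeverLastOn (insert l D) T x) : l ∈ D :=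
  by_contra fun hlD => hD.2 l hl hlD ⟨Set.insert_subset hl hD.1.1, h⟩

theorem nonempty (hD : IsMaximalASPD A D) : D.Nonempty := by
  rw [Set.nonempty_iff_ne_empty]
  rintro rfl
  refine Set.notMem_empty A.toList
    (hD.mem_of_forall_triple ⟨A.nodup_toList, by simp⟩ fun T _ hT3 => ?_)
  obtain ⟨x, hxT, hx⟩ : ∃ x ∈ T, (restrictPref A.toList T).getLast? ≠ some x := by
    rcases (restrictPref A.toList T).getLast? with _ | c
    · obtain ⟨x, hx⟩ := Finset.card_pos.1 (by omega : 0 < T.card)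
      exact ⟨x, hx, by simp⟩
    · obtain ⟨x, hx, hxc⟩ := T.exists_mem_ne (by omega) c
      exact ⟨x, hx, by simpa using hxc.symm⟩
  exact ⟨x, hxT, Set.forall_mem_insert.2 ⟨hx, by simp⟩⟩

theorem append_swap_mem (hD : IsMaximalASPD A D) (hall : ∀ l ∈ D, l.getLast? = some b)
    {p : List α} {u : α} (hl : p ++ [u, b] ∈ D) : p ++ [b, u] ∈ D := by
  have hperm : (p ++ [u, b]).Perm (p ++ [b, u]) :=
    (List.perm_append_left_iff p).2 (List.Perm.swap b u [])
  have hpref : p ++ [b, u] ∈ PrefOn A :=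
    ⟨hperm.nodup_iff.1 (hD.1.1 hl).1, (List.toFinset_eq_of_perm _ _ hperm).symm.trans (hD.1.1 hl).2⟩
  refine hD.mem_of_forall_triple hpref fun T hT hT3 => ?_
  -- On a triple containing `u` and `b`, the orders of `D` rank `b` last and the new one `u`,
  -- so the third alternative is never last.
  by_cases hub : u ∈ T ∧ b ∈ T
  · obtain ⟨c, hcT, hc⟩ := Finset.exists_mem_notMem_of_card_lt_card
      (Finset.card_le_two.trans_lt (by omega : 2 < T.card)) (s := {u, b})
    simp only [Finset.mem_insert, Finset.mem_singleton, not_or] at hc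
    refine ⟨c, hcT, Set.forall_mem_insert.2 ⟨?_, fun l hl => ?_⟩⟩
    · rw [getLast?_restrictPref (by simp) hub.1]
      exact fun h => hc.1 (Option.some_injective _ h).symm
    · rw [getLast?_restrictPref (hall l hl) hub.2]
      exact fun h => hc.2 (Option.some_injective _ h).symm
  · obtain ⟨x, hxT, hx⟩ : ∃ x ∈ T, NeverLastOn D T x := hD.1.2 T hT hT3
    refine ⟨x, hxT, hx.insert hl ?_⟩
    rw [restrictPref_append, restrictPref_append]
    by_cases hu : u ∈ T <;> by_cases hb : b ∈ T <;> simp_all [restrictPref]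

theorem exists_two_bottoms (hD : IsMaximalASPD A D) (hA : 2 ≤ A.card) :
    ∃ b₁ b₂, b₁ ≠ b₂ ∧ (∃ l ∈ D, l.getLast? = some b₁) ∧ (∃ l ∈ D, l.getLast? = some b₂) := by
  obtain ⟨l, hl⟩ := hD.nonempty
  have hlA := hD.1.1 hl
  obtain ⟨p, u, b, rfl⟩ := exists_eq_append_pair ((length_eq_card_of_mem_prefOn hlA).symm ▸ hA)
  by_cases hall : ∀ l ∈ D, l.getLast? = some b
  · have hub : u ≠ b := by simpa using (List.nodup_append.1 hlA.1).2.1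
    exact absurd (by simpa using hall _ (hD.append_swap_mem hall hl)) hub
  obtain ⟨l', hl', hne⟩ : ∃ l' ∈ D, l'.getLast? ≠ some b := by simpa using hall
  obtain ⟨c, hc⟩ := exists_getLast?_of_mem_prefOn (hD.1.1 hl')
    ((mem_iff_of_mem_prefOn hlA).1 (List.mem_append_right p (by simp : b ∈ [u, b])))
  exact ⟨b, c, fun h => hne (h ▸ hc), ⟨_, hl, by simp⟩, ⟨l', hl', hc⟩⟩

variable (hD : IsMaximalASPD A D) (hne : a₁ ≠ a₂) (hb₁ : ∃ l ∈ D, l.getLast? = some a₁)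
  (hb₂ : ∃ l ∈ D, l.getLast? = some a₂)
include hD hne hb₁ hb₂

theorem restrictPref_append_mem (hl : l ∈ D) :
    restrictPref l (A \ {a₁, a₂}) ++ [a₂, a₁] ∈ D := by
  obtain ⟨l₁, hl₁, hlast₁⟩ := hb₁
  obtain ⟨l₂, hl₂, hlast₂⟩ := hb₂
  have ha₁ := (mem_iff_of_mem_prefOn (hD.1.1 hl₁)).1 (List.mem_of_getLast? hlast₁)
  have ha₂ := (mem_iff_of_mem_prefOn (hD.1.1 hl₂)).1 (List.mem_of_getLast? hlast₂)
  have hpref := append_mem_prefOn (restrictPref_mem_prefOn (hD.1.1 hl) Finset.sdiff_subset)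
    (t := [a₂, a₁]) (T := {a₁, a₂}) ⟨by simp [hne.symm], by simp [Finset.pair_comm]⟩
    Finset.sdiff_disjoint
  rw [Finset.sdiff_union_of_subset (by simp [Finset.insert_subset_iff, ha₁, ha₂])] at hpref
  refine hD.mem_of_forall_triple hpref fun T hT hT3 => ?_
  obtain ⟨x, hxT, hx⟩ : ∃ x ∈ T, NeverLastOn D T x := hD.1.2 T hT hT3
  refine ⟨x, hxT, ?_⟩
  by_cases h₁ : a₁ ∈ T
  · exact hx.insert hl₁ (by
      rw [getLast?_restrictPref hlast₁ h₁, getLast?_restrictPref (by simp) h₁])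
  by_cases h₂ : a₂ ∈ T
  · exact hx.insert hl₂ (by
      rw [getLast?_restrictPref_sdiff_append hT h₁, if_pos h₂, getLast?_restrictPref hlast₂ h₂])
  · exact hx.insert hl (by rw [getLast?_restrictPref_sdiff_append hT h₁, if_neg h₂])

theorem exists_bottom_getLast?_restrictPref_eq (hl : l ∈ D) (hT : T ⊆ A) (h₁ : a₁ ∉ T) :
    ∃ l' ∈ D, l'.getLast? = some a₁ ∧
      (restrictPref l' T).getLast? = (restrictPref l T).getLast? := by
  rcases hD.1.getLast?_eq_or_eq hne hb₁ hb₂ hl with hlast | hlast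
  · exact ⟨l, hl, hlast, rfl⟩
  refine ⟨_, hD.restrictPref_append_mem hne hb₁ hb₂ hl, by simp, ?_⟩
  rw [getLast?_restrictPref_sdiff_append hT h₁]
  split_ifs with h₂
  · exact (getLast?_restrictPref hlast h₂).symm
  · rfl

theorem bottomRestrict_isMaximalASPD :
    IsMaximalASPD (A.erase a₁) (bottomRestrict A D a₁) := by
  refine ⟨hD.1.bottomRestrict, fun m hm hmD hins => hmD ?_⟩
  rw [mem_bottomRestrict_iff hD.1.1]
  obtain ⟨l₁, hl₁, hlast₁⟩ := hb₁
  have ha₁ := (mem_iff_of_mem_prefOn (hD.1.1 hl₁)).1 (List.mem_of_getLast? hlast₁)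
  have hpref := append_mem_prefOn hm (t := [a₁]) (T := {a₁}) ⟨by simp, by simp⟩
    (Finset.disjoint_singleton_right.2 (Finset.notMem_erase _ _))
  rw [Finset.erase_eq, Finset.sdiff_union_of_subset (by simpa using ha₁)] at hpref
  refine hD.mem_of_forall_triple hpref fun T hT hT3 => ?_
  by_cases h₁ : a₁ ∈ T
  · obtain ⟨x, hxT, hx⟩ : ∃ x ∈ T, NeverLastOn D T x := hD.1.2 T hT hT3
    exact ⟨x, hxT, hx.insert hl₁ (by
      rw [getLast?_restrictPref hlast₁ h₁, getLast?_restrictPref List.getLast?_concat h₁])⟩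
  have hTe : T ⊆ A.erase a₁ := fun a ha => Finset.mem_erase.2 ⟨fun h => h₁ (h ▸ ha), hT ha⟩
  obtain ⟨x, hxT, hx⟩ := hins.2 T hTe hT3
  obtain ⟨hxm, hx⟩ := Set.forall_mem_insert.1 hx
  refine ⟨x, hxT, Set.forall_mem_insert.2 ⟨?_, fun l hl => ?_⟩⟩
  · simpa [restrictPref_append, restrictPref, h₁] using hxm
  · obtain ⟨l', hl', hlast', heq⟩ :=
      hD.exists_bottom_getLast?_restrictPref_eq hne ⟨l₁, hl₁, hlast₁⟩ hb₂ hl hT h₁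
    rw [← heq, ← restrictPref_restrictPref l' hTe]
    exact hx _ ⟨l', hl', hlast', rfl⟩

end IsMaximalASPD

theorem IsMaximalASPD.exists_pairAt (hD : IsMaximalASPD A D) {x y : α} (hx : x ∈ A) (hy : y ∈ A)
    (hxy : x ≠ y) : ∃ l ∈ D, ∃ i, PairAt l x y i := by
  induction hn : A.card using Nat.strong_induction_on generalizing A D with
  | _ n ih =>
  obtain ⟨b₁, b₂, hne, hb₁, hb₂⟩ := hD.exists_two_bottoms (Finset.one_lt_card.2 ⟨x, hx, y, hy, hxy⟩)
  have descend : ∀ {b c}, b ≠ c → (∃ l ∈ D, l.getLast? = some b) →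
      (∃ l ∈ D, l.getLast? = some c) → x ≠ b → y ≠ b → ∃ l ∈ D, ∃ i, PairAt l x y i := by
    intro b c hbc hb hc hxb hyb
    obtain ⟨l, hl, hlast⟩ := hb
    have hbA := (mem_iff_of_mem_prefOn (hD.1.1 hl)).1 (List.mem_of_getLast? hlast)
    obtain ⟨m, hm, i, hi⟩ := ih _ (hn ▸ Finset.card_erase_lt_of_mem hbA)
      (hD.bottomRestrict_isMaximalASPD hbc ⟨l, hl, hlast⟩ hc) (Finset.mem_erase.2 ⟨hxb, hx⟩)
      (Finset.mem_erase.2 ⟨hyb, hy⟩) rfl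
    exact ⟨m ++ [b], (mem_bottomRestrict_iff hD.1.1).1 hm, i, hi.append _⟩
  by_cases h₁ : x ≠ b₁ ∧ y ≠ b₁
  · exact descend hne hb₁ hb₂ h₁.1 h₁.2
  by_cases h₂ : x ≠ b₂ ∧ y ≠ b₂
  · exact descend hne.symm hb₂ hb₁ h₂.1 h₂.2
  obtain ⟨l, hl⟩ := hD.nonempty
  have hpair := pairAt_append_pair (restrictPref l (A \ {b₁, b₂})) b₂ b₁
  refine ⟨_, hD.restrictPref_append_mem hne hb₁ hb₂ hl, (restrictPref l (A \ {b₁, b₂})).length, ?_⟩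
  obtain ⟨rfl, rfl⟩ | ⟨rfl, rfl⟩ : (x = b₁ ∧ y = b₂) ∨ (x = b₂ ∧ y = b₁) := by grind
  exacts [hpair.symm, hpair]

end Maximal

theorem topmost_contiguous_in_split_general (A : Finset α) (D : Set (List α))
    (hD : IsMaximalASPD A D) (a₁ a₂ : α) (hne : a₁ ≠ a₂)
    (hb₁ : ∃ l ∈ D, l.getLast? = some a₁) (hb₂ : ∃ l ∈ D, l.getLast? = some a₂)
    (x y : α) (hx : x ∈ A \ {a₁, a₂}) (hy : y ∈ A \ {a₁, a₂}) (hxy : x ≠ y) :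
    {i : ℕ | ∃ l ∈ D, PairAt l x y i}.Nonempty ∧
    {i : ℕ | ∃ l ∈ bottom2Restrict A D a₁ a₂, PairAt l x y i}.Nonempty ∧
    sInf {i : ℕ | ∃ l ∈ D, PairAt l x y i} =
      sInf {i : ℕ | ∃ l ∈ bottom2Restrict A D a₁ a₂, PairAt l x y i} := by
  set S := {i : ℕ | ∃ l ∈ D, PairAt l x y i}
  set S' := {i : ℕ | ∃ l ∈ bottom2Restrict A D a₁ a₂, PairAt l x y i}
  have hxA := (Finset.mem_sdiff.1 hx).1
  have hyA := (Finset.mem_sdiff.1 hy).1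
  have hsplit (m : List α) : m ∈ bottom2Restrict A D a₁ a₂ ↔ m ++ [a₂, a₁] ∈ D :=
    mem_bottom2Restrict_iff hD.1.1 (Finset.one_lt_card.2 ⟨x, hxA, y, hyA, hxy⟩)
  have hS : ∀ i ∈ S, ∃ j ∈ S', j ≤ i := by
    rintro i ⟨l, hl, hi⟩
    obtain ⟨j, hji, hj⟩ := hi.exists_le_restrictPref hx hy
    exact ⟨j, ⟨_, (hsplit _).2 (hD.restrictPref_append_mem hne hb₁ hb₂ hl), hj⟩, hji⟩
  have hS' : ∀ j ∈ S', ∃ i ∈ S, i ≤ j := by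
    rintro j ⟨m, hm, hj⟩
    exact ⟨j, ⟨_, (hsplit m).1 hm, hj.append _⟩, le_rfl⟩
  obtain ⟨l, hl, i, hi⟩ := hD.exists_pairAt hxA hyA hxy
  obtain ⟨j, hj, -⟩ := hS i ⟨l, hl, hi⟩
  exact ⟨⟨i, l, hl, hi⟩, ⟨j, hj⟩, csInf_eq_csInf_of_forall_exists_le hS hS'⟩

/-- In a maximal Arrow's single-peaked domain `D` on at least four alternatives
with bottom alternatives `a₁, a₂`, a topmost contiguous occurrence of any two
distinct `x, y ∈ A ∖ {a₁, a₂}` appears in the split domain `D'`. -/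
theorem topmost_contiguous_in_split (A : Finset α) (D : Set (List α))
    (hD : IsMaximalASPD A D) (hA : 4 ≤ A.card) (a₁ a₂ : α) (hne : a₁ ≠ a₂)
    (hb₁ : ∃ l ∈ D, l.getLast? = some a₁) (hb₂ : ∃ l ∈ D, l.getLast? = some a₂)
    (x y : α) (hx : x ∈ A \ {a₁, a₂}) (hy : y ∈ A \ {a₁, a₂}) (hxy : x ≠ y) :
    {i : ℕ | ∃ l ∈ D, PairAt l x y i}.Nonempty ∧
    {i : ℕ | ∃ l ∈ bottom2Restrict A D a₁ a₂, PairAt l x y i}.Nonempty ∧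
    sInf {i : ℕ | ∃ l ∈ D, PairAt l x y i} =
      sInf {i : ℕ | ∃ l ∈ bottom2Restrict A D a₁ a₂, PairAt l x y i} :=
  topmost_contiguous_in_split_general A D hD a₁ a₂ hne hb₁ hb₂ x y hx hy hxy
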